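/- Let f : ℝⁿ → ℝ be differentiable such that for each coordinate i there is a constant Lᵢ > 0 with |∇ᵢf(x + α eᵢ) − ∇ᵢf(x)| ≤ Lᵢ|α| for all x ∈ ℝⁿ and α ∈ ℝ. Then for any x and any coordinate i, the point x⁺ = x − (1/Lᵢ)∇ᵢf(x)eᵢ satisfies f(x⁺) ≤ f(x) − (1/(2Lᵢ))(∇ᵢf(x))². Moreover, if instead x⁺ is obtained by exact coordinate optimization, x⁺ = x + α* eᵢ where α* minimizes α ↦ f(x + α eᵢ), the same bound f(x⁺) ≤ f(x) − (1/(2Lᵢ))(∇ᵢf(x))² holds. -/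

import Mathlib

/-! Along the line `t ↦ x + t • eᵢ` the function `g t = f (x + t • eᵢ)` has derivative
`g' t = ∇ᵢ f (x + t • eᵢ)`, which is `Lᵢ`-Lipschitz in `t`. Hence `t ↦ g t - g' 0 * t - Lᵢ t² / 2`
is antitone for `t ≥ 0` (and monotone for `t ≤ 0`), giving the one-dimensional descent lemma
`g α ≤ g 0 + g' 0 * α + Lᵢ α² / 2`. Its right side is minimal at `α = -g' 0 / Lᵢ`, with value
`g 0 - (g' 0)² / (2 Lᵢ)`; an exact coordinate minimizer does at least as well as this step. -/

open Set
open scoped RealInnerProductSpace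

theorem HasGradientAt.hasDerivAt_comp_add_smul {F : Type*} [NormedAddCommGroup F]
    [InnerProductSpace ℝ F] [CompleteSpace F] {f : F → ℝ} {g x v : F} {t : ℝ}
    (h : HasGradientAt f g (x + t • v)) :
    HasDerivAt (fun s : ℝ => f (x + s • v)) ⟪g, v⟫ t := by
  have hline : HasDerivAt (fun s : ℝ => x + s • v) v t := by
    simpa using ((hasDerivAt_id t).smul_const v).const_add x
  exact (h.hasFDerivAt.comp_hasDerivAt t hline).congr_deriv rfl

theorem le_add_mul_add_sq_of_nonneg {g g' : ℝ → ℝ} {L α : ℝ}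
    (hg : ∀ t, HasDerivAt g (g' t) t) (hlip : ∀ t, |g' t - g' 0| ≤ L * |t|) (hα : 0 ≤ α) :
    g α ≤ g 0 + g' 0 * α + L / 2 * α ^ 2 := by
  set φ : ℝ → ℝ := fun t => g t - g' 0 * t - L / 2 * t ^ 2
  have hφ : ∀ t, HasDerivAt φ (g' t - g' 0 - L * t) t := fun t =>
    (((hg t).sub ((hasDerivAt_id t).const_mul (g' 0))).sub
      ((hasDerivAt_pow 2 t).const_mul (L / 2))).congr_deriv (by
        simp only [mul_one, Nat.cast_ofNat, Nat.add_one_sub_one, pow_one]; ring)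
  have hanti : AntitoneOn φ (Icc 0 α) := by
    refine antitoneOn_of_hasDerivWithinAt_nonpos (convex_Icc 0 α)
      (fun t _ => (hφ t).continuousAt.continuousWithinAt) (fun t _ => (hφ t).hasDerivWithinAt)
      fun t ht => ?_
    rw [interior_Icc] at ht
    have := (le_abs_self _).trans (hlip t)
    rw [abs_of_pos ht.1] at this
    linarith
  have := hanti (left_mem_Icc.2 hα) (right_mem_Icc.2 hα) hα
  simp only [φ] at this
  linarith

theorem le_add_mul_add_sq {g g' : ℝ → ℝ} {L : ℝ}
    (hg : ∀ t, HasDerivAt g (g' t) t) (hlip : ∀ t, |g' t - g' 0| ≤ L * |t|) (α : ℝ) :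
    g α ≤ g 0 + g' 0 * α + L / 2 * α ^ 2 := by
  rcases le_total 0 α with hα | hα
  · exact le_add_mul_add_sq_of_nonneg hg hlip hα
  · have hg_neg : ∀ t, HasDerivAt (fun s => g (-s)) (-g' (-t)) t := fun t =>
      ((hg (-t)).comp t (hasDerivAt_neg t)).congr_deriv (mul_neg_one _)
    have hlip_neg : ∀ t, |-g' (-t) - -g' (-0)| ≤ L * |t| := fun t => by
      rw [neg_zero, neg_sub_neg, abs_sub_comm, ← abs_neg t]
      exact hlip (-t)
    simpa using le_add_mul_add_sq_of_nonneg hg_neg hlip_neg (neg_nonneg.2 hα)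

-- Also true for `L = 0`, where both sides vanish because `1 / 0 = 0`.
theorem mul_neg_one_div_mul_add_half_mul_sq (c L : ℝ) :
    c * -(1 / L * c) + L / 2 * (-(1 / L * c)) ^ 2 = -(1 / (2 * L) * c ^ 2) := by
  rcases eq_or_ne L 0 with rfl | hL
  · simp
  · field_simp; ring

theorem coordinate_descent_progress_Li_general {n : ℕ}
    (f : EuclideanSpace ℝ (Fin n) → ℝ)
    (f' : EuclideanSpace ℝ (Fin n) → EuclideanSpace ℝ (Fin n))
    (hf : ∀ x, HasGradientAt f (f' x) x)
    (L : Fin n → ℝ)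
    (hlip : ∀ (x : EuclideanSpace ℝ (Fin n)) (α : ℝ) (i : Fin n),
      |f' (x + α • EuclideanSpace.single i 1) i - f' x i| ≤ L i * |α|)
    (x : EuclideanSpace ℝ (Fin n)) (i : Fin n) :
    f (x - ((1 / L i) * f' x i) • EuclideanSpace.single i 1)
      ≤ f x - 1 / (2 * L i) * (f' x i) ^ 2 ∧
    ∀ αs : ℝ,
      (∀ α : ℝ, f (x + αs • EuclideanSpace.single i 1)
        ≤ f (x + α • EuclideanSpace.single i 1)) →
      f (x + αs • EuclideanSpace.single i 1)
        ≤ f x - 1 / (2 * L i) * (f' x i) ^ 2 := by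
  set e := EuclideanSpace.single (𝕜 := ℝ) i 1
  have hderiv : ∀ t : ℝ, HasDerivAt (fun s => f (x + s • e)) (f' (x + t • e) i) t := fun t => by
    simpa [e, EuclideanSpace.inner_single_right] using
      (hf (x + t • e)).hasDerivAt_comp_add_smul
  have hdescent : ∀ α : ℝ, f (x + α • e) ≤ f x + f' x i * α + L i / 2 * α ^ 2 := fun α => by
    simpa using le_add_mul_add_sq hderiv (fun t => by simpa using hlip x t i) α
  have hstep : f (x + (-(1 / L i * f' x i)) • e) ≤ f x - 1 / (2 * L i) * f' x i ^ 2 := by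
    have := hdescent (-(1 / L i * f' x i))
    rw [add_assoc, mul_neg_one_div_mul_add_half_mul_sq] at this
    linarith
  refine ⟨?_, fun αs hmin => (hmin _).trans hstep⟩
  rwa [sub_eq_add_neg, ← neg_smul]

/-- coordinate descent progress bound with coordinate-wise
Lipschitz constants `Lᵢ`, both for the step-size `1/Lᵢ` and for exact
coordinate optimization. -/
theorem coordinate_descent_progress_Li {n : ℕ}
    (f : EuclideanSpace ℝ (Fin n) → ℝ)
    (f' : EuclideanSpace ℝ (Fin n) → EuclideanSpace ℝ (Fin n))
    (hf : ∀ x, HasGradientAt f (f' x) x)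
    (L : Fin n → ℝ) (hL : ∀ i, 0 < L i)
    (hlip : ∀ (x : EuclideanSpace ℝ (Fin n)) (α : ℝ) (i : Fin n),
      |f' (x + α • EuclideanSpace.single i 1) i - f' x i| ≤ L i * |α|)
    (x : EuclideanSpace ℝ (Fin n)) (i : Fin n) :
    f (x - ((1 / L i) * f' x i) • EuclideanSpace.single i 1)
      ≤ f x - 1 / (2 * L i) * (f' x i) ^ 2 ∧
    ∀ αs : ℝ,
      (∀ α : ℝ, f (x + αs • EuclideanSpace.single i 1)
        ≤ f (x + α • EuclideanSpace.single i 1)) →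
      f (x + αs • EuclideanSpace.single i 1)
        ≤ f x - 1 / (2 * L i) * (f' x i) ^ 2 :=
  coordinate_descent_progress_Li_general f f' hf L hlip x i
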